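/- If w is a Baxter permutation of length n, then its inverse w⁻¹ is also a Baxter permutation. -/

import Mathlib

/-- The entry of the word `l` at (1-indexed) position `i`, i.e. `w(i)`. -/
def entry (l : List ℕ) (i : ℕ) : ℕ := l.getD (i - 1) 0

/-- `l` is the one-line notation of a permutation of `{1,…,n}`. -/
def IsPermWord (n : ℕ) (l : List ℕ) : Prop := l.Perm (List.range' 1 n)

/-- `l` is a Baxter permutation of length `n`: a permutation of `{1,…,n}`
avoiding the vincular patterns 3-14-2 and 2-41-3. -/
def IsBaxter (n : ℕ) (l : List ℕ) : Prop :=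
  IsPermWord n l ∧
  (¬ ∃ i j k, 1 ≤ i ∧ i < j ∧ j + 1 < k ∧ k ≤ n ∧
      entry l j < entry l k ∧ entry l k < entry l i ∧ entry l i < entry l (j + 1)) ∧
  (¬ ∃ i j k, 1 ≤ i ∧ i < j ∧ j + 1 < k ∧ k ≤ n ∧
      entry l (j + 1) < entry l i ∧ entry l i < entry l k ∧ entry l k < entry l j)

/-- `l` is fixed under quarter-turn (90°) rotation of its permutation matrix:
`w(w(i)) = n+1-i` for all `i ∈ {1,…,n}`. -/
def QuarterFixed (n : ℕ) (l : List ℕ) : Prop :=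
  ∀ i, 1 ≤ i → i ≤ n → entry l (entry l i) = n + 1 - i

/-- `l` is fixed under half-turn (180°) rotation of its permutation matrix:
`w(n+1-i) = n+1-w(i)` for all `i ∈ {1,…,n}`. -/
def HalfFixed (n : ℕ) (l : List ℕ) : Prop :=
  ∀ i, 1 ≤ i → i ≤ n → entry l (n + 1 - i) = n + 1 - entry l i

/-- The entry at position `i` is a left-to-right maximum. -/
def LRMaxAt (l : List ℕ) (i : ℕ) : Prop := ∀ k, 1 ≤ k → k < i → entry l k < entry l i

/-- The entry at position `i` is a right-to-left maximum. -/
def RLMaxAt (n : ℕ) (l : List ℕ) (i : ℕ) : Prop := ∀ k, i < k → k ≤ n → entry l k < entry l i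

/-- The entry at position `i` is a left-to-right minimum. -/
def LRMinAt (l : List ℕ) (i : ℕ) : Prop := ∀ k, 1 ≤ k → k < i → entry l i < entry l k

/-- The entry at position `i` is a right-to-left minimum. -/
def RLMinAt (n : ℕ) (l : List ℕ) (i : ℕ) : Prop := ∀ k, i < k → k ≤ n → entry l i < entry l k

/-- The (1-indexed) position of the value `v` in `l`, i.e. `w⁻¹(v)`. -/
def pos (l : List ℕ) (v : ℕ) : ℕ := l.idxOf v + 1

/-- The one-line notation of the inverse of the permutation `l` of `{1,…,n}`. -/
def invWord (n : ℕ) (l : List ℕ) : List ℕ := (List.range' 1 n).map (pos l)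

/-- The number of descents of a permutation word of length `n`:
indices `i ∈ {1,…,n-1}` with `w(i) > w(i+1)`. -/
noncomputable def des (n : ℕ) (l : List ℕ) : ℕ :=
  {i : ℕ | 1 ≤ i ∧ i + 1 ≤ n ∧ entry l (i + 1) < entry l i}.ncard

/-- Insert a new largest label `n+1` at (1-indexed) position `p`
in the permutation `l` of `{1,…,n}`. -/
def insertMax (n p : ℕ) (l : List ℕ) : List ℕ := l.insertIdx (p - 1) (n + 1)

/-- Insert a new smallest label `1` at (1-indexed) position `p`
(all old labels get increased by 1). -/
def insertMin (p : ℕ) (l : List ℕ) : List ℕ := (l.map (· + 1)).insertIdx (p - 1) 1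

/-- Append the value `j` at the end of the permutation `l`
(old labels `≥ j` get increased by 1). -/
def appendEnd (j : ℕ) (l : List ℕ) : List ℕ :=
  (l.map (fun x => if x < j then x else x + 1)) ++ [j]

/-- Standardize a word with distinct entries: replace the entries by `1,…,m` preserving
relative order (each entry is replaced by the number of entries less than or equal to it). -/
def standardize (l : List ℕ) : List ℕ := l.map (fun x => (l.filter (fun y => y ≤ x)).length)

/-!
A 3-14-2 occurrence in `w⁻¹` means that the values `j, k, i, j+1` appear in this order in `w`,
with `i < j` and `j + 1 < k`. Walking in `w` from the position of `k` to that of `i`, the entries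
pass from above `j + 1` to below `j` without ever taking the values `j` or `j + 1`, so some
adjacent pair jumps over both; together with the outer occurrences of `j` and `j + 1` this
adjacent pair is a 2-41-3 occurrence in `w`. Symmetrically, a 2-41-3 in `w⁻¹` yields a 3-14-2
in `w`.
-/

def Contains3142 (n : ℕ) (l : List ℕ) : Prop :=
  ∃ i j k, 1 ≤ i ∧ i < j ∧ j + 1 < k ∧ k ≤ n ∧
    entry l j < entry l k ∧ entry l k < entry l i ∧ entry l i < entry l (j + 1)

def Contains2413 (n : ℕ) (l : List ℕ) : Prop :=
  ∃ i j k, 1 ≤ i ∧ i < j ∧ j + 1 < k ∧ k ≤ n ∧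
    entry l (j + 1) < entry l i ∧ entry l i < entry l k ∧ entry l k < entry l j

theorem isBaxter_iff {n : ℕ} {l : List ℕ} :
    IsBaxter n l ↔ IsPermWord n l ∧ ¬ Contains3142 n l ∧ ¬ Contains2413 n l :=
  Iff.rfl

theorem Nat.exists_le_lt_and_not_succ {P : ℕ → Prop} {b c : ℕ} (hbc : b ≤ c)
    (hb : P b) (hc : ¬ P c) : ∃ p, b ≤ p ∧ p < c ∧ P p ∧ ¬ P (p + 1) := by
  induction c, hbc using Nat.le_induction with
  | base => exact absurd hb hc
  | succ c hbc ih =>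
    by_cases hPc : P c
    · exact ⟨c, hbc, c.lt_succ_self, hPc, hc⟩
    · obtain ⟨p, hbp, hpc, hPp, hPp'⟩ := ih hPc
      exact ⟨p, hbp, hpc.trans c.lt_succ_self, hPp, hPp'⟩

namespace IsPermWord

variable {n : ℕ} {l : List ℕ}

theorem length_eq (hp : IsPermWord n l) : l.length = n := by
  simpa using List.Perm.length_eq hp

theorem nodup (hp : IsPermWord n l) : l.Nodup :=
  hp.nodup_iff.mpr List.nodup_range'

theorem mem_iff (hp : IsPermWord n l) {v : ℕ} : v ∈ l ↔ 1 ≤ v ∧ v ≤ n := by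
  rw [List.Perm.mem_iff hp, List.mem_range'_1]
  omega

theorem entry_eq_getElem (hp : IsPermWord n l) {i : ℕ} (h1 : 1 ≤ i) (h2 : i ≤ n) :
    entry l i = l[i - 1]'(by rw [hp.length_eq]; omega) :=
  List.getD_eq_getElem l 0 _

theorem entry_le (hp : IsPermWord n l) {i : ℕ} (h1 : 1 ≤ i) (h2 : i ≤ n) :
    1 ≤ entry l i ∧ entry l i ≤ n := by
  rw [← hp.mem_iff, hp.entry_eq_getElem h1 h2]
  exact List.getElem_mem _

theorem pos_entry (hp : IsPermWord n l) {i : ℕ} (h1 : 1 ≤ i) (h2 : i ≤ n) :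
    pos l (entry l i) = i := by
  rw [hp.entry_eq_getElem h1 h2, pos, List.Nodup.idxOf_getElem hp.nodup]
  omega

theorem entry_ne_of_ne_pos (hp : IsPermWord n l) {i v : ℕ} (h1 : 1 ≤ i) (h2 : i ≤ n)
    (hi : i ≠ pos l v) : entry l i ≠ v := fun he =>
  hi (he ▸ (hp.pos_entry h1 h2).symm)

theorem pos_le (hp : IsPermWord n l) {v : ℕ} (h1 : 1 ≤ v) (h2 : v ≤ n) :
    1 ≤ pos l v ∧ pos l v ≤ n := by
  have := List.idxOf_lt_length_iff.mpr (hp.mem_iff.mpr ⟨h1, h2⟩)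
  rw [hp.length_eq] at this
  unfold pos
  omega

theorem entry_pos (hp : IsPermWord n l) {v : ℕ} (h1 : 1 ≤ v) (h2 : v ≤ n) :
    entry l (pos l v) = v := by
  have hv := List.idxOf_lt_length_iff.mpr (hp.mem_iff.mpr ⟨h1, h2⟩)
  rw [entry, pos, Nat.add_sub_cancel, List.getD_eq_getElem l 0 hv]
  exact List.getElem_idxOf hv

end IsPermWord

theorem entry_invWord {n : ℕ} (l : List ℕ) {v : ℕ} (h1 : 1 ≤ v) (h2 : v ≤ n) :
    entry (invWord n l) v = pos l v := by
  rw [entry, invWord, List.getD_eq_getElem _ 0 (by simp; omega), List.getElem_map,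
    List.getElem_range'_1]
  congr 1
  omega

theorem IsPermWord.invWord {n : ℕ} {l : List ℕ} (hp : IsPermWord n l) :
    IsPermWord n (invWord n l) := by
  have hnodup : (_root_.invWord n l).Nodup := by
    refine List.Nodup.map_on (fun x hx y hy hxy => ?_) List.nodup_range'
    rw [List.mem_range'_1] at hx hy
    rw [← hp.entry_pos (v := x) (by omega) (by omega), hxy,
      hp.entry_pos (by omega) (by omega)]
  refine (List.perm_ext_iff_of_nodup hnodup List.nodup_range').mpr fun a => ?_
  simp only [_root_.invWord, List.mem_map, List.mem_range'_1]
  constructor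
  · rintro ⟨v, hv, rfl⟩
    have := hp.pos_le (v := v) (by omega) (by omega)
    omega
  · intro ha
    have := hp.entry_le (i := a) (by omega) (by omega)
    exact ⟨entry l a, by omega, hp.pos_entry (by omega) (by omega)⟩

section

variable {n : ℕ} {l : List ℕ}

theorem contains2413_of_contains3142_invWord (hp : IsPermWord n l)
    (h : Contains3142 n (invWord n l)) : Contains2413 n l := by
  obtain ⟨i, j, k, hi, hij, hjk, hkn, e1, e2, e3⟩ := h
  rw [entry_invWord l (by omega) (by omega), entry_invWord l (by omega) hkn] at e1
  rw [entry_invWord l (by omega) hkn, entry_invWord l hi (by omega)] at e2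
  rw [entry_invWord l hi (by omega), entry_invWord l (by omega) (by omega)] at e3
  have ei := hp.entry_pos hi (by omega)
  have ej := hp.entry_pos (v := j) (by omega) (by omega)
  have ej' := hp.entry_pos (v := j + 1) (by omega) (by omega)
  have ek := hp.entry_pos (by omega) hkn
  have rj := hp.pos_le (v := j) (by omega) (by omega)
  have rj' := hp.pos_le (v := j + 1) (by omega) (by omega)
  obtain ⟨p, hkp, hpi, hp_above, hp_not_above⟩ :=
    Nat.exists_le_lt_and_not_succ (P := fun q => j + 1 < entry l q) e2.le
      (by simp only [ek]; omega) (by simp only [ei]; omega)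
  have hne := hp.entry_ne_of_ne_pos (i := p + 1) (v := j) (by omega) (by omega) (by omega)
  have hne' := hp.entry_ne_of_ne_pos (i := p + 1) (v := j + 1) (by omega) (by omega) (by omega)
  exact ⟨pos l j, p, pos l (j + 1), by omega, by omega, by omega, by omega,
    by omega, by omega, by omega⟩

theorem contains3142_of_contains2413_invWord (hp : IsPermWord n l)
    (h : Contains2413 n (invWord n l)) : Contains3142 n l := by
  obtain ⟨i, j, k, hi, hij, hjk, hkn, e1, e2, e3⟩ := h
  rw [entry_invWord l (by omega) (by omega), entry_invWord l hi (by omega)] at e1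
  rw [entry_invWord l hi (by omega), entry_invWord l (by omega) hkn] at e2
  rw [entry_invWord l (by omega) hkn, entry_invWord l (by omega) (by omega)] at e3
  have ei := hp.entry_pos hi (by omega)
  have ej := hp.entry_pos (v := j) (by omega) (by omega)
  have ej' := hp.entry_pos (v := j + 1) (by omega) (by omega)
  have ek := hp.entry_pos (by omega) hkn
  have rj := hp.pos_le (v := j) (by omega) (by omega)
  have rj' := hp.pos_le (v := j + 1) (by omega) (by omega)
  obtain ⟨p, hip, hpk, hp_below, hp_not_below⟩ :=
    Nat.exists_le_lt_and_not_succ (P := fun q => entry l q < j) e2.le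
      (by simp only [ei]; omega) (by simp only [ek]; omega)
  have hne := hp.entry_ne_of_ne_pos (i := p + 1) (v := j) (by omega) (by omega) (by omega)
  have hne' := hp.entry_ne_of_ne_pos (i := p + 1) (v := j + 1) (by omega) (by omega) (by omega)
  exact ⟨pos l (j + 1), p, pos l j, by omega, by omega, by omega, by omega,
    by omega, by omega, by omega⟩

end

/-- The inverse of a Baxter permutation is a Baxter permutation. -/
theorem baxter_inv (n : ℕ) (l : List ℕ) (hl : IsBaxter n l) :
    IsBaxter n (invWord n l) := by
  obtain ⟨hp, h3142, h2413⟩ := isBaxter_iff.mp hl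
  exact isBaxter_iff.mpr ⟨hp.invWord,
    fun h => h2413 (contains2413_of_contains3142_invWord hp h),
    fun h => h3142 (contains3142_of_contains2413_invWord hp h)⟩
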